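/- Let 0 < α < 1. For each natural number n define c_n : ℝ × ℝ → ℝ by c_0(x,t) = cos x and, for n ≥ 1, c_n(x,t) = cos x · ∑_{k=0}^{n} (−1)^k t^(k(1−α)) / Γ(1 + k(1−α)) + t² sin x · ∑_{j=0}^{n−1} (−1)^j t^(j(1−α)) / Γ(j(1−α) + 3). Then for every n ≥ 0, every x ∈ ℝ and every t > 0, the sequence satisfies the variational iteration recursion c_{n+1}(x,t) = cos x + ∫₀ᵗ (1/Γ(1−α)) · d/dξ [ ∫₀^ξ (ξ−τ)^(−α) · ∂²c_n/∂x² (x,τ) dτ ] dξ + (t²/2) sin x. -/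

import Mathlib

open Real MeasureTheory

/-- The VIM iterates for the case study: `c₀(x,t) = cos x` and, for `n ≥ 1`,
`cₙ(x,t) = cos x ∑_{k=0}^{n} (-1)^k t^(k(1-α))/Γ(1+k(1-α))
  + t² sin x ∑_{j=0}^{n-1} (-1)^j t^(j(1-α))/Γ(j(1-α)+3)`. -/
noncomputable def vimIter (α : ℝ) : ℕ → ℝ → ℝ → ℝ
  | 0 => fun x _ => Real.cos x
  | n + 1 => fun x t =>
      Real.cos x *
          (∑ k ∈ Finset.range (n + 2),
            (-1 : ℝ) ^ k * t ^ ((k : ℝ) * (1 - α)) /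
              Real.Gamma (1 + (k : ℝ) * (1 - α))) +
        t ^ 2 * Real.sin x *
          (∑ j ∈ Finset.range (n + 1),
            (-1 : ℝ) ^ j * t ^ ((j : ℝ) * (1 - α)) /
              Real.Gamma ((j : ℝ) * (1 - α) + 3))

/-! With `e_β(t) = t ^ β / Γ(β + 1)`, the Beta integral gives
`∫₀ˢ (s - τ)^(-α) e_β(τ) dτ = Γ(1 - α) e_{β+1-α}(s)`, so the Riemann–Liouville derivative sends
`e_β` to `e_{β-α}` and its integral over `[0, t]` sends `e_β` to `e_{β+1-α}`: the correction term
shifts every exponent by `1 - α`. For `t > 0` the iterate `c_n` is `cos x` times a signed sum of the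
`e_{k(1-α)}` plus `sin x` times a signed sum of the `e_{j(1-α)+2}`, and `∂²ₓ c_n = -c_n`. So the
correction term of `c_n` is exactly `c_{n+1}` minus its two leading terms `cos x = cos x · e_0`
and `(t² / 2) sin x = sin x · e_2`. -/

theorem integral_rpow_mul_sub_rpow {p q a : ℝ} (hp : 0 < p) (hq : 0 < q) (ha : 0 < a) :
    ∫ x in (0:ℝ)..a, x ^ (p - 1) * (a - x) ^ (q - 1) =
      a ^ (p + q - 1) * (Gamma p * Gamma q / Gamma (p + q)) := by
  apply Complex.ofReal_injective
  have hbeta := Complex.betaIntegral_scaled p q ha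
  rw [Complex.betaIntegral_eq_Gamma_mul_div _ _ (by simpa) (by simpa)] at hbeta
  rw [Complex.ofReal_mul, Complex.ofReal_cpow ha.le, Complex.ofReal_div, Complex.ofReal_mul,
    ← Complex.Gamma_ofReal, ← Complex.Gamma_ofReal, ← Complex.Gamma_ofReal]
  push_cast
  rw [← hbeta, ← intervalIntegral.integral_ofReal]
  refine intervalIntegral.integral_congr fun x hx => ?_
  rw [Set.uIcc_of_le ha.le] at hx
  simp only [Complex.ofReal_mul, Complex.ofReal_cpow hx.1, Complex.ofReal_cpow (sub_nonneg.2 hx.2)]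
  push_cast
  ring

noncomputable def powDivGamma (β t : ℝ) : ℝ := t ^ β / Gamma (β + 1)

lemma powDivGamma_pos {β t : ℝ} (hβ : -1 < β) (ht : 0 < t) : 0 < powDivGamma β t :=
  div_pos (rpow_pos_of_pos ht β) (Gamma_pos_of_pos (by linarith))

@[simp]
lemma powDivGamma_zero_left (t : ℝ) : powDivGamma 0 t = 1 := by
  simp [powDivGamma]

lemma powDivGamma_two (t : ℝ) : powDivGamma 2 t = t ^ 2 / 2 := by
  have hΓ : Gamma (2 + 1) = 2 := by rw [Gamma_add_one two_ne_zero, Gamma_two, mul_one]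
  rw [powDivGamma, hΓ, rpow_two]

lemma integral_sub_rpow_mul_powDivGamma {α β s : ℝ} (hα : α < 1) (hβ : -1 < β) (hs : 0 < s) :
    ∫ τ in (0:ℝ)..s, (s - τ) ^ (-α) * powDivGamma β τ =
      Gamma (1 - α) * powDivGamma (β + 1 - α) s := by
  have hbeta := integral_rpow_mul_sub_rpow (p := β + 1) (q := 1 - α) (by linarith) (by linarith) hs
  simp only [add_sub_cancel_right, sub_sub_cancel_left] at hbeta
  have hΓ : Gamma (β + 1) ≠ 0 := (Gamma_pos_of_pos (by linarith)).ne'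
  simp only [powDivGamma, mul_div_assoc', intervalIntegral.integral_div]
  rw [intervalIntegral.integral_congr fun τ _ => mul_comm ((s - τ) ^ (-α)) (τ ^ β), hbeta,
    show β + 1 - α + 1 = β + 1 + (1 - α) by ring, show β + 1 + (1 - α) - 1 = β + 1 - α by ring]
  field_simp

lemma intervalIntegrable_sub_rpow_mul_powDivGamma {α β s : ℝ} (hα : α < 1) (hβ : -1 < β)
    (hs : 0 < s) : IntervalIntegrable (fun τ => (s - τ) ^ (-α) * powDivGamma β τ) volume 0 s := by
  -- a function that is not interval integrable has integral `0`
  refine intervalIntegral.intervalIntegrable_of_integral_ne_zero ?_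
  rw [integral_sub_rpow_mul_powDivGamma hα hβ hs]
  exact (mul_pos (Gamma_pos_of_pos (by linarith)) (powDivGamma_pos (by linarith) hs)).ne'

lemma hasDerivAt_powDivGamma (γ : ℝ) {ξ : ℝ} (hξ : ξ ≠ 0) :
    HasDerivAt (powDivGamma γ) (powDivGamma (γ - 1) ξ) ξ := by
  have h := (hasDerivAt_rpow_const (p := γ) (Or.inl hξ)).div_const (Gamma (γ + 1))
  unfold powDivGamma
  rcases eq_or_ne γ 0 with rfl | hγ
  · -- both derivatives vanish, the right one because `Gamma 0 = 0`
    simpa using h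
  · refine h.congr_deriv ?_
    rw [sub_add_cancel, Gamma_add_one hγ, mul_div_mul_left _ _ hγ]

lemma integral_powDivGamma {β : ℝ} (hβ : -1 < β) (t : ℝ) :
    ∫ ξ in (0:ℝ)..t, powDivGamma β ξ = powDivGamma (β + 1) t := by
  have hβ1 : β + 1 ≠ 0 := by linarith
  simp only [powDivGamma, intervalIntegral.integral_div]
  rw [integral_rpow (Or.inl hβ), zero_rpow hβ1, sub_zero, Gamma_add_one hβ1, div_div]

lemma intervalIntegrable_powDivGamma {β : ℝ} (hβ : -1 < β) (t : ℝ) :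
    IntervalIntegrable (powDivGamma β) volume 0 t :=
  (intervalIntegral.intervalIntegrable_rpow' hβ).div_const _

noncomputable def riemannLiouvilleDeriv (α : ℝ) (g : ℝ → ℝ) (ξ : ℝ) : ℝ :=
  1 / Gamma (1 - α) * deriv (fun s => ∫ τ in (0:ℝ)..s, (s - τ) ^ (-α) * g τ) ξ

section PowerSums

open Finset

variable {ι : Type*} {F : Finset ι} {c β : ι → ℝ} {g : ℝ → ℝ} {α : ℝ}

lemma integral_sub_rpow_mul_eq_sum (hα : α < 1) (hβ : ∀ i ∈ F, -1 < β i)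
    (hg : ∀ τ, 0 < τ → g τ = ∑ i ∈ F, c i * powDivGamma (β i) τ) {s : ℝ} (hs : 0 < s) :
    ∫ τ in (0:ℝ)..s, (s - τ) ^ (-α) * g τ =
      Gamma (1 - α) * ∑ i ∈ F, c i * powDivGamma (β i + 1 - α) s := by
  have hexpand : ∀ τ ∈ Set.uIoc 0 s, (s - τ) ^ (-α) * g τ =
      ∑ i ∈ F, c i * ((s - τ) ^ (-α) * powDivGamma (β i) τ) := by
    intro τ hτ
    rw [hg τ (Set.uIoc_of_le hs.le ▸ hτ).1, mul_sum]
    exact sum_congr rfl fun i _ => by ring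
  rw [intervalIntegral.integral_congr_ae (ae_of_all _ hexpand),
    intervalIntegral.integral_finsetSum, mul_sum]
  · refine sum_congr rfl fun i hi => ?_
    rw [intervalIntegral.integral_const_mul, integral_sub_rpow_mul_powDivGamma hα (hβ i hi) hs]
    ring
  · exact fun i hi => (intervalIntegrable_sub_rpow_mul_powDivGamma hα (hβ i hi) hs).const_mul _

lemma riemannLiouvilleDeriv_eq_sum (hα : α < 1) (hβ : ∀ i ∈ F, -1 < β i)
    (hg : ∀ τ, 0 < τ → g τ = ∑ i ∈ F, c i * powDivGamma (β i) τ) {ξ : ℝ} (hξ : 0 < ξ) :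
    riemannLiouvilleDeriv α g ξ = ∑ i ∈ F, c i * powDivGamma (β i - α) ξ := by
  have hinner : (fun s => ∫ τ in (0:ℝ)..s, (s - τ) ^ (-α) * g τ) =ᶠ[nhds ξ]
      fun s => Gamma (1 - α) * ∑ i ∈ F, c i * powDivGamma (β i + 1 - α) s := by
    filter_upwards [Ioi_mem_nhds hξ] with s hs
    exact integral_sub_rpow_mul_eq_sum hα hβ hg hs
  have hderiv : HasDerivAt (fun s => Gamma (1 - α) * ∑ i ∈ F, c i * powDivGamma (β i + 1 - α) s)
      (Gamma (1 - α) * ∑ i ∈ F, c i * powDivGamma (β i - α) ξ) ξ := by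
    refine (HasDerivAt.fun_sum fun i _ => ?_).const_mul _
    rw [show β i - α = β i + 1 - α - 1 by ring]
    exact (hasDerivAt_powDivGamma (β i + 1 - α) hξ.ne').const_mul (c i)
  have hΓ : Gamma (1 - α) ≠ 0 := (Gamma_pos_of_pos (by linarith)).ne'
  rw [riemannLiouvilleDeriv, hinner.deriv_eq, hderiv.deriv, ← mul_assoc, one_div_mul_cancel hΓ,
    one_mul]

lemma integral_riemannLiouvilleDeriv_eq_sum (hα : α < 1) (hβ : ∀ i ∈ F, 0 ≤ β i)
    (hg : ∀ τ, 0 < τ → g τ = ∑ i ∈ F, c i * powDivGamma (β i) τ) {t : ℝ} (ht : 0 ≤ t) :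
    ∫ ξ in (0:ℝ)..t, riemannLiouvilleDeriv α g ξ =
      ∑ i ∈ F, c i * powDivGamma (β i + 1 - α) t := by
  have hβα : ∀ i ∈ F, -1 < β i - α := fun i hi => by linarith [hβ i hi]
  have hpos : ∀ ξ ∈ Set.uIoc 0 t, riemannLiouvilleDeriv α g ξ =
      ∑ i ∈ F, c i * powDivGamma (β i - α) ξ := fun ξ hξ =>
    riemannLiouvilleDeriv_eq_sum hα (fun i hi => by linarith [hβ i hi]) hg
      (Set.uIoc_of_le ht ▸ hξ).1
  rw [intervalIntegral.integral_congr_ae (ae_of_all _ hpos), intervalIntegral.integral_finsetSum]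
  · refine sum_congr rfl fun i hi => ?_
    rw [intervalIntegral.integral_const_mul, integral_powDivGamma (hβα i hi),
      show β i - α + 1 = β i + 1 - α by ring]
  · exact fun i hi => (intervalIntegrable_powDivGamma (hβα i hi) t).const_mul _

end PowerSums

lemma iteratedDeriv_two_cos_mul_add_sin_mul (A B x : ℝ) :
    iteratedDeriv 2 (fun y => cos y * A + sin y * B) x = -(cos x * A + sin x * B) := by
  have hderiv : deriv (fun y => cos y * A + sin y * B) = fun y => -sin y * A + cos y * B :=
    funext fun y => (((hasDerivAt_cos y).mul_const A).add ((hasDerivAt_sin y).mul_const B)).deriv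
  have hderiv2 : HasDerivAt (fun y => -sin y * A + cos y * B) (-cos x * A + -sin x * B) x :=
    ((hasDerivAt_sin x).neg.mul_const A).add ((hasDerivAt_cos x).mul_const B)
  rw [iteratedDeriv_succ, iteratedDeriv_one, hderiv, hderiv2.deriv]
  ring

section VimIter

open Finset

variable (α : ℝ)

noncomputable def vimCosPart (n : ℕ) (t : ℝ) : ℝ :=
  ∑ k ∈ range (n + 1), (-1) ^ k * powDivGamma (k * (1 - α)) t

noncomputable def vimSinPart (n : ℕ) (t : ℝ) : ℝ :=
  ∑ j ∈ range n, (-1) ^ j * powDivGamma (j * (1 - α) + 2) t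

lemma vimIter_eq_cos_mul_add_sin_mul (n : ℕ) (x : ℝ) {t : ℝ} (ht : 0 < t) :
    vimIter α n x t = cos x * vimCosPart α n t + sin x * vimSinPart α n t := by
  cases n with
  | zero => simp [vimIter, vimCosPart, vimSinPart]
  | succ n =>
    simp only [vimIter, vimCosPart, vimSinPart, powDivGamma, mul_sum]
    congr 1
    · refine sum_congr rfl fun k _ => ?_
      rw [add_comm (1 : ℝ)]
      ring
    · refine sum_congr rfl fun j _ => ?_
      rw [rpow_add ht, show (j : ℝ) * (1 - α) + 2 + 1 = j * (1 - α) + 3 by ring, rpow_two]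
      ring

lemma vimCosPart_succ (n : ℕ) (t : ℝ) :
    vimCosPart α (n + 1) t =
      1 - ∑ k ∈ range (n + 1), (-1) ^ k * powDivGamma (k * (1 - α) + 1 - α) t := by
  rw [vimCosPart, sum_range_succ', add_comm, ← sub_neg_eq_add, ← sum_neg_distrib]
  congr 1
  · simp
  · refine sum_congr rfl fun k _ => ?_
    rw [show ((k + 1 : ℕ) : ℝ) * (1 - α) = k * (1 - α) + 1 - α by push_cast; ring, pow_succ]
    ring

lemma vimSinPart_succ (n : ℕ) (t : ℝ) :
    vimSinPart α (n + 1) t =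
      t ^ 2 / 2 - ∑ j ∈ range n, (-1) ^ j * powDivGamma (j * (1 - α) + 2 + 1 - α) t := by
  rw [vimSinPart, sum_range_succ', add_comm, ← sub_neg_eq_add, ← sum_neg_distrib]
  congr 1
  · simp [powDivGamma_two]
  · refine sum_congr rfl fun j _ => ?_
    rw [show ((j + 1 : ℕ) : ℝ) * (1 - α) + 2 = j * (1 - α) + 2 + 1 - α by push_cast; ring, pow_succ]
    ring

end VimIter

theorem vimIter_satisfies_recursion_general (α : ℝ) (hα1 : α < 1) :
    ∀ (n : ℕ) (x t : ℝ), 0 < t →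
      vimIter α (n + 1) x t =
        Real.cos x +
          (∫ ξ in (0:ℝ)..t,
            (1 / Real.Gamma (1 - α)) *
              deriv (fun s => ∫ τ in (0:ℝ)..s,
                (s - τ) ^ (-α) * iteratedDeriv 2 (fun y => vimIter α n y τ) x) ξ) +
          (t ^ 2 / 2) * Real.sin x := by
  intro n x t ht
  let c : ℕ ⊕ ℕ → ℝ := Sum.elim (fun k => -cos x * (-1) ^ k) (fun j => -sin x * (-1) ^ j)
  let β : ℕ ⊕ ℕ → ℝ := Sum.elim (fun k => k * (1 - α)) (fun j => j * (1 - α) + 2)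
  have hβ : ∀ i ∈ (Finset.range (n + 1)).disjSum (Finset.range n), 0 ≤ β i := by
    have := sub_pos.2 hα1
    rintro (k | j) _ <;> simp only [β, Sum.elim_inl, Sum.elim_inr] <;> positivity
  have hg : ∀ τ, 0 < τ → iteratedDeriv 2 (fun y => vimIter α n y τ) x =
      ∑ i ∈ (Finset.range (n + 1)).disjSum (Finset.range n), c i * powDivGamma (β i) τ := by
    intro τ hτ
    simp only [vimIter_eq_cos_mul_add_sin_mul α n _ hτ, iteratedDeriv_two_cos_mul_add_sin_mul,
      Finset.sum_disjSum, vimCosPart, vimSinPart, c, β, Sum.elim_inl, Sum.elim_inr, mul_assoc,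
      ← Finset.mul_sum]
    ring
  have hrl := integral_riemannLiouvilleDeriv_eq_sum hα1 hβ hg ht.le
  simp only [riemannLiouvilleDeriv] at hrl
  rw [hrl, vimIter_eq_cos_mul_add_sin_mul α _ _ ht, vimCosPart_succ, vimSinPart_succ,
    Finset.sum_disjSum]
  simp only [c, β, Sum.elim_inl, Sum.elim_inr, mul_assoc, ← Finset.mul_sum]
  ring

theorem vimIter_satisfies_recursion (α : ℝ) (hα0 : 0 < α) (hα1 : α < 1) :
    ∀ (n : ℕ) (x t : ℝ), 0 < t →
      vimIter α (n + 1) x t =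
        Real.cos x +
          (∫ ξ in (0:ℝ)..t,
            (1 / Real.Gamma (1 - α)) *
              deriv (fun s => ∫ τ in (0:ℝ)..s,
                (s - τ) ^ (-α) * iteratedDeriv 2 (fun y => vimIter α n y τ) x) ξ) +
          (t ^ 2 / 2) * Real.sin x :=
  vimIter_satisfies_recursion_general α hα1
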